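/- arXiv:2505.06704 — 4 statements merged into one kernel-verified Lean document; each statement's English description precedes it below -/
import Mathlib

section
/- Fix a ∈ ℝ and set b = 0, c = 0. If E² = a² + 1, then the ℓ²-solution space Sol(a, 0, 0, E) is infinite-dimensional (it is not a finite-dimensional ℂ-vector space). If instead E ≠ a, E ≠ −a and E² ≠ a² + 1, then the only ℓ²-solution is ψ = 0, i.e., Sol(a, 0, 0, E) = {0}. -/
noncomputable section

open scoped ComplexConjugate

/-- The on-site matrix `V` of the local model. -/
def Vmat (a : ℝ) (b c : ℂ) : Matrix (Fin 4) (Fin 4) ℂ :=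
  !![(a : ℂ), conj c, 0, conj b;
     c, -(a : ℂ), conj b, 0;
     0, b, (a : ℂ), -c;
     b, 0, -(conj c), -(a : ℂ)]

/-- The hopping matrix `A` of the local model. -/
def Amat : Matrix (Fin 4) (Fin 4) ℂ :=
  !![0, -1, 0, 0;
     0, 0, 0, 0;
     0, 0, 0, 0;
     0, 0, 1, 0]

/-- `ψ : ℕ → (Fin 4 → ℂ)` (with `ψ n` standing for the value at the site `n + 1` of the
half-line `{1, 2, 3, …}`) solves the half-line eigenvalue equation `(H♯ − E)ψ = 0`:
`(V − E·I)ψ(1) + A*ψ(2) = 0` and `Aψ(n) + (V − E·I)ψ(n+1) + A*ψ(n+2) = 0` for all `n ≥ 1`. -/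
def IsSolSeq (a : ℝ) (b c : ℂ) (E : ℝ) (ψ : ℕ → Fin 4 → ℂ) : Prop :=
  (Vmat a b c - (E : ℂ) • 1).mulVec (ψ 0) + (Amat.conjTranspose).mulVec (ψ 1) = 0 ∧
    ∀ n : ℕ,
      Amat.mulVec (ψ n) + (Vmat a b c - (E : ℂ) • 1).mulVec (ψ (n + 1)) +
        (Amat.conjTranspose).mulVec (ψ (n + 2)) = 0

/-- The `ℓ²` condition: `∑_{n ≥ 1} ‖ψ(n)‖² < ∞`. -/
def IsL2Seq (ψ : ℕ → Fin 4 → ℂ) : Prop :=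
  Summable fun n => ∑ i, ‖ψ n i‖ ^ 2

/-- The space `Sol(a, b, c, E)` of `ℓ²`-solutions of the half-line eigenvalue equation. -/
def Sol (a : ℝ) (b c : ℂ) (E : ℝ) : Set (ℕ → Fin 4 → ℂ) :=
  {ψ | IsSolSeq a b c E ψ ∧ IsL2Seq ψ}

/-- The sequence `e₁` with `e₁(n) = (c^{n−1}, 0, 0, 0)` (convention `0⁰ = 1`). -/
def eSeq₁ (c : ℂ) : ℕ → Fin 4 → ℂ := fun n => ![c ^ n, 0, 0, 0]

/-- The sequence `e₄` with `e₄(n) = (0, 0, 0, c^{n−1})` (convention `0⁰ = 1`). -/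
def eSeq₄ (c : ℂ) : ℕ → Fin 4 → ℂ := fun n => ![0, 0, 0, c ^ n]


/-! ### Auxiliary material -/

lemma mulVecV (a E : ℝ) (v : Fin 4 → ℂ) :
    (Vmat a 0 0 - (E : ℂ) • 1).mulVec v =
      ![((a:ℂ)-E) * v 0, (-(a:ℂ)-E) * v 1, ((a:ℂ)-E) * v 2, (-(a:ℂ)-E) * v 3] := by
  funext i
  fin_cases i <;>
    simp [Vmat, Matrix.mulVec, dotProduct, Fin.sum_univ_four, Matrix.sub_apply,
      Matrix.smul_apply, Matrix.one_apply]

lemma mulVecA (v : Fin 4 → ℂ) : Amat.mulVec v = ![-v 1, 0, 0, v 2] := by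
  funext i
  fin_cases i <;>
    simp [Amat, Matrix.mulVec, dotProduct, Fin.sum_univ_four]

lemma mulVecAstar (v : Fin 4 → ℂ) :
    Amat.conjTranspose.mulVec v = ![0, -v 0, v 3, 0] := by
  funext i
  fin_cases i <;>
    simp [Amat, Matrix.mulVec, dotProduct, Fin.sum_univ_four,
      Matrix.conjTranspose_apply, Matrix.vecHead, Matrix.vecTail]

/-- A family of finitely supported solutions (for `E² = a² + 1`). -/
def phiSeq (a E : ℝ) (k : ℕ) : ℕ → Fin 4 → ℂ := fun n =>
  ![if n = k + 1 then 1 else 0, if n = k then ((a:ℂ) - E) else 0, 0, 0]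

lemma phiSeq_mem (a E : ℝ) (hE : E ^ 2 = a ^ 2 + 1) (k : ℕ) :
    phiSeq a E k ∈ Sol a 0 0 E := by
  have hEC : (E:ℂ) ^ 2 = (a:ℂ) ^ 2 + 1 := by exact_mod_cast hE
  refine ⟨⟨?_, ?_⟩, ?_⟩
  · rw [mulVecV, mulVecAstar]
    simp only [phiSeq, Matrix.cons_add_cons, Matrix.empty_add_empty, Matrix.cons_val_zero,
      Matrix.cons_val_one, Matrix.head_cons, Matrix.cons_val_two, Matrix.tail_cons,
      Matrix.cons_val_three, Matrix.cons_eq_zero_iff]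
    have hc : (1 = k + 1) ↔ (0 = k) := by omega
    simp only [hc]
    refine ⟨by simp, ?_, by ring_nf, by ring_nf, by simp [Matrix.empty_eq]⟩
    split_ifs with h
    · linear_combination hEC
    · simp
  · intro n
    rw [mulVecV, mulVecA, mulVecAstar]
    simp only [phiSeq, Matrix.cons_add_cons, Matrix.empty_add_empty, Matrix.cons_val_zero,
      Matrix.cons_val_one, Matrix.head_cons, Matrix.cons_val_two, Matrix.tail_cons,
      Matrix.cons_val_three, Matrix.cons_eq_zero_iff]
    have hc1 : (n + 1 = k + 1) ↔ (n = k) := by omega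
    have hc2 : (n + 2 = k + 1) ↔ (n + 1 = k) := by omega
    simp only [hc1, hc2]
    refine ⟨?_, ?_, by ring_nf, by ring_nf, by simp [Matrix.empty_eq]⟩
    · split_ifs with h <;> ring
    · split_ifs with h
      · linear_combination hEC
      · simp
  · apply summable_of_ne_finset_zero (s := ({k, k + 1} : Finset ℕ))
    intro n hn
    simp only [Finset.mem_insert, Finset.mem_singleton, not_or] at hn
    simp [phiSeq, hn.1, hn.2, Fin.sum_univ_four]

lemma phiSeq_li (a E : ℝ) (N : ℕ) :
    LinearIndependent ℂ (fun i : Fin N => phiSeq a E (i : ℕ)) := by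
  rw [Fintype.linearIndependent_iff]
  intro g hg i
  have h := congrFun (congrFun hg ((i : ℕ) + 1)) 0
  simp only [Finset.sum_apply, Pi.smul_apply, Pi.zero_apply, phiSeq, smul_eq_mul,
    Matrix.cons_val_zero, mul_ite, mul_one, mul_zero] at h
  have hcond : ∀ x : Fin N, ((i : ℕ) + 1 = (x : ℕ) + 1) ↔ x = i := by
    intro x
    constructor
    · intro hh; exact Fin.ext (by omega)
    · intro hh; subst hh; rfl
  simp only [hcond] at h
  rwa [Finset.sum_ite_eq' Finset.univ i g, if_pos (Finset.mem_univ i)] at h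


/-- Fix `a ∈ ℝ` and set `b = 0`, `c = 0`. If `E² = a² + 1`, then the ℓ²-solution space
`Sol(a,0,0,E)` is infinite-dimensional (not contained in the span of any finite set).
If instead `E ≠ a`, `E ≠ −a` and `E² ≠ a² + 1`, then `Sol(a,0,0,E) = {0}`. -/
theorem stmt6 (a E : ℝ) :
    (E ^ 2 = a ^ 2 + 1 →
      ¬ ∃ s : Finset (ℕ → Fin 4 → ℂ),
        Sol a 0 0 E ⊆ (Submodule.span ℂ (s : Set (ℕ → Fin 4 → ℂ)) :
          Set (ℕ → Fin 4 → ℂ))) ∧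
    (E ≠ a → E ≠ -a → E ^ 2 ≠ a ^ 2 + 1 → Sol a 0 0 E = {0}) := by
  constructor
  · -- infinite-dimensional case
    intro hE
    rintro ⟨s, hs⟩
    set p : Submodule ℂ (ℕ → Fin 4 → ℂ) := Submodule.span ℂ (s : Set (ℕ → Fin 4 → ℂ)) with hp
    haveI : Module.Finite ℂ p := FiniteDimensional.span_finset ℂ s
    set N := Module.finrank ℂ p with hN
    have hmem : ∀ i : Fin (N + 1), phiSeq a E (i : ℕ) ∈ p := fun i =>
      hs (phiSeq_mem a E hE i)
    set v : Fin (N + 1) → p := fun i => ⟨phiSeq a E (i : ℕ), hmem i⟩ with hv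
    have hli : LinearIndependent ℂ v := by
      apply LinearIndependent.of_comp p.subtype
      exact phiSeq_li a E (N + 1)
    have hcard := hli.fintype_card_le_finrank
    simp only [Fintype.card_fin, ← hN] at hcard
    omega
  · -- trivial case
    intro h1 h2 h3
    ext ψ
    simp only [Set.mem_singleton_iff]
    constructor
    · rintro ⟨⟨hb, hr⟩, -⟩
      rw [mulVecV, mulVecAstar] at hb
      simp only [mulVecV, mulVecA, mulVecAstar] at hr
      set α : ℂ := (a:ℂ) - E with hα
      set β : ℂ := -(a:ℂ) - E with hβ
      have hαne : α ≠ 0 := by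
        rw [hα]; intro hh; apply h1
        have : (E:ℂ) = a := by linear_combination -hh
        exact_mod_cast this
      have hβne : β ≠ 0 := by
        rw [hβ]; intro hh; apply h2
        have : (E:ℂ) = -a := by linear_combination -hh
        exact_mod_cast this
      have hκ : (1:ℂ) - α * β ≠ 0 := by
        rw [hα, hβ]; intro hh; apply h3
        have : (E:ℂ)^2 = (a:ℂ)^2 + 1 := by linear_combination -hh
        exact_mod_cast this
      have B0 := congrFun hb 0
      have B1 := congrFun hb 1
      have B2 := congrFun hb 2
      have B3 := congrFun hb 3
      have R0 := fun n => congrFun (hr n) 0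
      have R1 := fun n => congrFun (hr n) 1
      have R2 := fun n => congrFun (hr n) 2
      have R3 := fun n => congrFun (hr n) 3
      simp only [Pi.add_apply, Pi.zero_apply, Matrix.cons_val_zero, Matrix.cons_val_one,
        Matrix.head_cons, Matrix.cons_val_two, Matrix.tail_cons, Matrix.cons_val_three,
        add_zero, zero_add] at B0 B1 B2 B3 R0 R1 R2 R3
      have hx0 : ψ 0 0 = 0 := (mul_eq_zero.mp B0).resolve_left hαne
      have hw0 : ψ 0 3 = 0 := (mul_eq_zero.mp B3).resolve_left hβne
      have hx1 : ψ 1 0 = 0 := by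
        have key : ((1:ℂ) - α * β) * ψ 1 0 = 0 := by linear_combination -B1 - β * R0 0
        exact (mul_eq_zero.mp key).resolve_left hκ
      have hx2 : ∀ n, ψ (n+2) 0 = 0 := by
        intro n
        have key : ((1:ℂ) - α * β) * ψ (n+2) 0 = 0 := by
          linear_combination -(R1 n) - β * R0 (n+1)
        exact (mul_eq_zero.mp key).resolve_left hκ
      have hx : ∀ n, ψ n 0 = 0 := fun n =>
        match n with | 0 => hx0 | 1 => hx1 | (n+2) => hx2 n
      have hy : ∀ n, ψ n 1 = 0 := by
        intro n
        have hh := R0 n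
        rw [hx (n+1)] at hh
        linear_combination -hh
      have hw1 : ψ 1 3 = 0 := by
        have key : ((1:ℂ) - α * β) * ψ 1 3 = 0 := by linear_combination B2 - α * R3 0
        exact (mul_eq_zero.mp key).resolve_left hκ
      have hw2 : ∀ n, ψ (n+2) 3 = 0 := by
        intro n
        have key : ((1:ℂ) - α * β) * ψ (n+2) 3 = 0 := by
          linear_combination R2 n - α * R3 (n+1)
        exact (mul_eq_zero.mp key).resolve_left hκ
      have hw : ∀ n, ψ n 3 = 0 := fun n =>
        match n with | 0 => hw0 | 1 => hw1 | (n+2) => hw2 n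
      have hz : ∀ n, ψ n 2 = 0 := by
        intro n
        have hh := R3 n
        rw [hw (n+1)] at hh
        linear_combination hh
      funext n i
      fin_cases i <;> simp [hx n, hy n, hz n, hw n]
    · rintro rfl
      refine ⟨⟨?_, ?_⟩, ?_⟩
      · simp [Matrix.mulVec_zero]
      · intro n; simp [Matrix.mulVec_zero]
      · have he : (fun n : ℕ => ∑ i : Fin 4, ‖(0 : ℕ → Fin 4 → ℂ) n i‖ ^ 2) =
            (fun _ : ℕ => (0 : ℝ)) := by
          funext n; simp
        unfold IsL2Seq
        rw [he]
        exact summable_zero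
end
end

section
/- Fix a ∈ ℝ and b ∈ ℂ with b ≠ 0, and set c = 0. Suppose E² = a² + |b|² (so E = ±√(a² + |b|²), and E ≠ 0 since b ≠ 0). Then Sol(a, b, 0, E) is one-dimensional, spanned by the sequence ((a + E)/b)·e₁⁰ + e₄⁰, where e₁⁰(1) = (1,0,0,0), e₄⁰(1) = (0,0,0,1) and e₁⁰(n) = e₄⁰(n) = 0 for n ≥ 2. Moreover, with E₊ = √(a² + |b|²) and E₋ = −E₊, the sum Sol(a, b, 0, E₊) + Sol(a, b, 0, E₋) is direct and equals the two-dimensional span of e₁⁰ and e₄⁰. -/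
/-!
With `c = 0` the matrix `V` splits into the blocks `M = [[a, b̄], [b, -a]]` on the coordinates
`(1, 4)` and `-J M J` on `(2, 3)`, where `J = diag(1, -1)`, and the hopping terms only couple the
two blocks at neighbouring sites. Since `M² = (a² + |b|²) I = E² I`, the eigenvalue equation forces
`x = -(M + E)(M - E) x = 0` for the `(1, 4)`-block `x` of `ψ(n)`, `n ≥ 2`, and then also the
`(2, 3)`-block of `ψ(n)`, `n ≥ 2`, vanishes. So every solution is supported on the first site,
where it must lie in `ker (V - E) ∩ ker A`; this is the line spanned by `((a + E)/b, 0, 0, 1)`.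
The two lines for `E = ±√(a² + |b|²)` have different slopes, hence span the plane of `e₁⁰, e₄⁰`.
-/

noncomputable section

open scoped ComplexConjugate

/-- The sequence `e₁⁰` with `e₁⁰(1) = (1,0,0,0)` and `e₁⁰(n) = 0` for `n ≥ 2`. -/
def e₁₀ : ℕ → Fin 4 → ℂ := fun n => if n = 0 then ![1, 0, 0, 0] else 0

/-- The sequence `e₄⁰` with `e₄⁰(1) = (0,0,0,1)` and `e₄⁰(n) = 0` for `n ≥ 2`. -/
def e₄₀ : ℕ → Fin 4 → ℂ := fun n => if n = 0 then ![0, 0, 0, 1] else 0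

open scoped Matrix

section Line

variable {K M : Type*} [Field K] [AddCommGroup M] [Module K M] {u v : M} {α β : K}

theorem inter_lines_eq_singleton_zero (huv : LinearIndependent K ![u, v]) (hαβ : α ≠ β) :
    {φ | ∃ z : K, φ = z • (α • u + v)} ∩ {χ | ∃ w : K, χ = w • (β • u + v)} = {0} := by
  ext ψ
  simp only [Set.mem_inter_iff, Set.mem_ofPred_eq, Set.mem_singleton_iff]
  constructor
  · rintro ⟨⟨z, rfl⟩, w, hzw⟩
    have hcomb : (z * α - w * β) • u + (z - w) • v = 0 := by
      rw [← sub_eq_zero.2 hzw]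
      module
    obtain ⟨hu, hv⟩ := LinearIndependent.pair_iff.1 huv _ _ hcomb
    have hz : z * (α - β) = 0 := by linear_combination hu - β * hv
    rw [(mul_eq_zero.1 hz).resolve_right (sub_ne_zero.2 hαβ), zero_smul]
  · rintro rfl
    exact ⟨⟨0, (zero_smul K _).symm⟩, ⟨0, (zero_smul K _).symm⟩⟩

theorem add_lines_eq_span_pair (hαβ : α ≠ β) :
    {ψ | ∃ φ ∈ {φ | ∃ z : K, φ = z • (α • u + v)}, ∃ χ ∈ {χ | ∃ w : K, χ = w • (β • u + v)},
        ψ = φ + χ} =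
      {ψ | ∃ x y : K, ψ = x • u + y • v} := by
  ext ψ
  simp only [Set.mem_ofPred_eq]
  constructor
  · rintro ⟨_, ⟨z, rfl⟩, _, ⟨w, rfl⟩, rfl⟩
    exact ⟨z * α + w * β, z + w, by module⟩
  · rintro ⟨x, y, rfl⟩
    have hαβ' : α - β ≠ 0 := sub_ne_zero.2 hαβ
    set z := (x - β * y) / (α - β)
    have hx : z * α + (y - z) * β = x := by
      simp only [z]
      field_simp
      ring
    refine ⟨_, ⟨z, rfl⟩, _, ⟨y - z, rfl⟩, ?_⟩
    calc x • u + y • v = (z * α + (y - z) * β) • u + y • v := by rw [hx]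
      _ = _ := by module

end Line

theorem isSolSeq_single_iff (a : ℝ) (b c : ℂ) (E : ℝ) (v : Fin 4 → ℂ) :
    IsSolSeq a b c E (Pi.single 0 v) ↔ (Vmat a b c - (E : ℂ) • 1) *ᵥ v = 0 ∧ Amat *ᵥ v = 0 := by
  constructor
  · rintro ⟨h₀, h⟩
    exact ⟨by simpa using h₀, by simpa using h 0⟩
  · rintro ⟨hV, hA⟩
    refine ⟨by simpa using hV, ?_⟩
    rintro (_ | n) <;> simp [hA]

theorem isL2Seq_single (v : Fin 4 → ℂ) : IsL2Seq (Pi.single 0 v) :=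
  summable_of_ne_finset_zero (s := {0}) fun n hn => by
    simp [Finset.notMem_singleton.1 hn]

section Blocks

variable (a : ℝ) (b : ℂ) (E : ℝ)

lemma Vmat_zero_sub_smul_one_mulVec (v : Fin 4 → ℂ) :
    (Vmat a b 0 - (E : ℂ) • 1) *ᵥ v =
      ![(a - E) * v 0 + conj b * v 3, (-a - E) * v 1 + conj b * v 2,
        b * v 1 + (a - E) * v 2, b * v 0 + (-a - E) * v 3] := by
  funext i
  fin_cases i <;>
    simp [Vmat, Matrix.mulVec, dotProduct, Fin.sum_univ_four, Matrix.one_apply]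

lemma Amat_mulVec (v : Fin 4 → ℂ) : Amat *ᵥ v = ![-v 1, 0, 0, v 2] := by
  funext i
  fin_cases i <;> simp [Amat, Matrix.mulVec, dotProduct, Fin.sum_univ_four]

lemma Amat_conjTranspose_mulVec (v : Fin 4 → ℂ) : Amatᴴ *ᵥ v = ![0, -v 0, v 3, 0] := by
  funext i
  fin_cases i <;>
    simp [Amat, Matrix.mulVec, dotProduct, Fin.sum_univ_four, Matrix.conjTranspose_apply]

lemma ofReal_sq_eq_sq_add_mul_conj (hE : E ^ 2 = a ^ 2 + ‖b‖ ^ 2) :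
    (E : ℂ) ^ 2 = a ^ 2 + b * conj b := by
  rw [Complex.mul_conj, Complex.normSq_eq_norm_sq]
  exact_mod_cast hE

theorem eq_zero_of_recurrence (hE : E ^ 2 = a ^ 2 + ‖b‖ ^ 2) {φ : ℕ → Fin 4 → ℂ}
    (h : ∀ n, Amat *ᵥ φ n + (Vmat a b 0 - (E : ℂ) • 1) *ᵥ φ (n + 1) + Amatᴴ *ᵥ φ (n + 2) = 0)
    (n : ℕ) : φ (n + 2) = 0 := by
  simp only [Amat_mulVec, Vmat_zero_sub_smul_one_mulVec, Amat_conjTranspose_mulVec] at h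
  have h0 := fun n => congrFun (h n) 0
  have h1 := fun n => congrFun (h n) 1
  have h2 := fun n => congrFun (h n) 2
  have h3 := fun n => congrFun (h n) 3
  simp only [Matrix.add_cons, Matrix.head_cons, Matrix.tail_cons, zero_add, add_zero,
    Matrix.empty_add_empty, Matrix.cons_val_zero, Matrix.cons_val_one, Matrix.cons_val,
    Pi.zero_apply] at h0 h1 h2 h3
  -- with `x(n) = (φ n 0, φ n 3)` and `y(n) = (φ n 1, φ n 2)`, these are the block equations
  -- `(M - E) x(n+1) = J y(n)` and `-J (M + E) J y(n+1) = J x(n+2)`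
  have hx : ∀ n, (a - E) * φ (n + 1) 0 + conj b * φ (n + 1) 3 = φ n 1 ∧
      b * φ (n + 1) 0 + (-a - E) * φ (n + 1) 3 = -φ n 2 := fun n =>
    ⟨by linear_combination h0 n, by linear_combination h3 n⟩
  have hy : ∀ n, (-a - E) * φ (n + 1) 1 + conj b * φ (n + 1) 2 = φ (n + 2) 0 ∧
      b * φ (n + 1) 1 + (a - E) * φ (n + 1) 2 = -φ (n + 2) 3 := fun n =>
    ⟨by linear_combination h1 n, by linear_combination h2 n⟩
  have key := ofReal_sq_eq_sq_add_mul_conj a b E hE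
  -- `x(n+2) = -(M + E)(M - E) x(n+2)`, and `(M + E)(M - E) = M² - E² = 0`
  have hx_zero : ∀ n, φ (n + 2) 0 = 0 ∧ φ (n + 2) 3 = 0 := fun n =>
    ⟨by linear_combination -(hy n).1 + (a + E) * (hx (n + 1)).1 +
        conj b * (hx (n + 1)).2 + φ (n + 2) 0 * key,
      by linear_combination (hy n).2 + b * (hx (n + 1)).1 - (a - E) * (hx (n + 1)).2 +
        φ (n + 2) 3 * key⟩
  have hy_zero : φ (n + 2) 1 = 0 ∧ φ (n + 2) 2 = 0 :=
    ⟨by linear_combination -(hx (n + 2)).1 + (a - E) * (hx_zero (n + 1)).1 +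
        conj b * (hx_zero (n + 1)).2,
      by linear_combination (hx (n + 2)).2 - b * (hx_zero (n + 1)).1 - (-a - E) * (hx_zero (n + 1)).2⟩
  funext i
  fin_cases i
  exacts [(hx_zero n).1, hy_zero.1, hy_zero.2, (hx_zero n).2]

theorem IsSolSeq.eq_single (hE : E ^ 2 = a ^ 2 + ‖b‖ ^ 2) {ψ : ℕ → Fin 4 → ℂ}
    (h : IsSolSeq a b 0 E ψ) : ψ = Pi.single 0 (ψ 0) := by
  -- prepending a zero turns the boundary condition into the bulk recurrence at the first site
  have hψ := eq_zero_of_recurrence a b E hE (φ := Stream'.cons 0 ψ) <| by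
    rintro (_ | n)
    · simpa [Stream'.cons] using h.1
    · exact h.2 n
  funext n
  rcases n with _ | n
  · simp
  · rw [Pi.single_eq_of_ne n.succ_ne_zero]
    exact hψ n

theorem Vmat_sub_mulVec_eq_zero_and_Amat_mulVec_eq_zero_iff (hb : b ≠ 0)
    (hE : E ^ 2 = a ^ 2 + ‖b‖ ^ 2) (v : Fin 4 → ℂ) :
    (Vmat a b 0 - (E : ℂ) • 1) *ᵥ v = 0 ∧ Amat *ᵥ v = 0 ↔
      ∃ z : ℂ, v = z • ![(a + E) / b, 0, 0, 1] := by
  rw [Vmat_zero_sub_smul_one_mulVec, Amat_mulVec]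
  constructor
  · rintro ⟨hV, hA⟩
    have h1 := congrFun hA 0
    have h2 := congrFun hA 3
    have h3 := congrFun hV 3
    simp only [Matrix.cons_val_zero, Matrix.cons_val, Pi.zero_apply, neg_eq_zero] at h1 h2 h3
    refine ⟨v 3, ?_⟩
    funext i
    fin_cases i
    · simp only [Fin.zero_eta, Pi.smul_apply, Matrix.cons_val_zero, smul_eq_mul]
      field_simp
      linear_combination h3
    · simpa using h1
    · simpa using h2
    · simp
  · rintro ⟨z, rfl⟩
    have key := ofReal_sq_eq_sq_add_mul_conj a b E hE
    refine ⟨?_, ?_⟩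
    · funext i
      fin_cases i
      · simp only [Fin.zero_eta, Pi.smul_apply, smul_eq_mul, Matrix.cons_val_zero,
          Matrix.cons_val, Matrix.cons_val_one, mul_one, mul_zero, add_zero, Pi.zero_apply]
        field_simp
        linear_combination -z * key
      · simp
      · simp
      · simp only [Fin.reduceFinMk, Pi.smul_apply, smul_eq_mul, Matrix.cons_val_zero,
          Matrix.cons_val, Matrix.cons_val_one, mul_one, mul_zero, add_zero, Pi.zero_apply]
        field_simp
        ring
    · funext i
      fin_cases i <;> simp

theorem smul_line_eq_single (z α : ℂ) : z • (α • e₁₀ + e₄₀) = Pi.single 0 (z • ![α, 0, 0, 1]) := by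
  funext n i
  rcases n with _ | n
  · fin_cases i <;> simp [e₁₀, e₄₀]
  · simp [e₁₀, e₄₀]

theorem mem_Sol_zero_iff (hb : b ≠ 0) (hE : E ^ 2 = a ^ 2 + ‖b‖ ^ 2) (ψ : ℕ → Fin 4 → ℂ) :
    ψ ∈ Sol a b 0 E ↔ ∃ z : ℂ, ψ = z • ((((a : ℂ) + E) / b) • e₁₀ + e₄₀) := by
  simp only [smul_line_eq_single]
  constructor
  · rintro ⟨hψ, -⟩
    have hsingle := hψ.eq_single a b E hE
    rw [hsingle, isSolSeq_single_iff,
      Vmat_sub_mulVec_eq_zero_and_Amat_mulVec_eq_zero_iff a b E hb hE] at hψ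
    obtain ⟨z, hz⟩ := hψ
    exact ⟨z, by rw [hsingle, hz]⟩
  · rintro ⟨z, rfl⟩
    refine ⟨?_, isL2Seq_single _⟩
    rw [isSolSeq_single_iff, Vmat_sub_mulVec_eq_zero_and_Amat_mulVec_eq_zero_iff a b E hb hE]
    exact ⟨z, rfl⟩

end Blocks

theorem linearIndependent_e₁₀_e₄₀ : LinearIndependent ℂ ![e₁₀, e₄₀] :=
  LinearIndependent.pair_iff.2 fun s t h =>
    ⟨by simpa [e₁₀, e₄₀] using congrFun (congrFun h 0) 0,
      by simpa [e₁₀, e₄₀] using congrFun (congrFun h 0) 3⟩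

/-- Fix `a ∈ ℝ`, `b ∈ ℂ` with `b ≠ 0`, and set `c = 0`. If `E² = a² + |b|²`, then
`Sol(a,b,0,E)` is one-dimensional, spanned by `((a+E)/b)·e₁⁰ + e₄⁰`. Moreover with
`E₊ = √(a² + |b|²)` and `E₋ = −E₊`, the sum `Sol(a,b,0,E₊) + Sol(a,b,0,E₋)` is direct and
equals the two-dimensional span of `e₁⁰` and `e₄⁰`. -/
theorem stmt7 (a : ℝ) (b : ℂ) (hb : b ≠ 0) :
    (∀ E : ℝ, E ^ 2 = a ^ 2 + ‖b‖ ^ 2 →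
      Sol a b 0 E =
        {ψ | ∃ z : ℂ, ψ = z • ((((a : ℂ) + (E : ℂ)) / b) • e₁₀ + e₄₀)}) ∧
    Sol a b 0 (Real.sqrt (a ^ 2 + ‖b‖ ^ 2)) ∩
        Sol a b 0 (-Real.sqrt (a ^ 2 + ‖b‖ ^ 2)) = {0} ∧
    {ψ | ∃ φ ∈ Sol a b 0 (Real.sqrt (a ^ 2 + ‖b‖ ^ 2)),
        ∃ χ ∈ Sol a b 0 (-Real.sqrt (a ^ 2 + ‖b‖ ^ 2)), ψ = φ + χ} =
      {ψ | ∃ z w : ℂ, ψ = z • e₁₀ + w • e₄₀} := by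
  have hSol : ∀ E : ℝ, E ^ 2 = a ^ 2 + ‖b‖ ^ 2 →
      Sol a b 0 E = {ψ | ∃ z : ℂ, ψ = z • ((((a : ℂ) + (E : ℂ)) / b) • e₁₀ + e₄₀)} :=
    fun E hE => Set.ext (mem_Sol_zero_iff a b E hb hE)
  set r := √(a ^ 2 + ‖b‖ ^ 2)
  have hr : r ^ 2 = a ^ 2 + ‖b‖ ^ 2 := Real.sq_sqrt (by positivity)
  have hnr : (-r) ^ 2 = a ^ 2 + ‖b‖ ^ 2 := by rw [neg_sq, hr]
  have hslopes : ((a : ℂ) + r) / b ≠ ((a : ℂ) + ↑(-r)) / b := by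
    have hr_ne : (r : ℂ) ≠ 0 := Complex.ofReal_ne_zero.2 (Real.sqrt_pos.2 (by positivity)).ne'
    rw [Complex.ofReal_neg, ne_eq, div_left_inj' hb]
    intro h
    exact hr_ne (by linear_combination h / 2)
  refine ⟨hSol, ?_, ?_⟩
  · rw [hSol r hr, hSol (-r) hnr]
    exact inter_lines_eq_singleton_zero linearIndependent_e₁₀_e₄₀ hslopes
  · rw [hSol r hr, hSol (-r) hnr]
    exact add_lines_eq_span_pair hslopes
end
end

section
/- Fix a ∈ ℝ, b, c ∈ ℂ and E ∈ ℝ. There exists a nonzero ℓ²-solution of the half-line eigenvalue equation if and only if one of the following holds: (a) c = 0 and E² = a² + |b|² + 1, in which case Sol(a, b, 0, E) is infinite-dimensional; (b) b = 0, a = 0, E = 0 and |c| < 1, in which case Sol(0, 0, c, 0) is two-dimensional; (c) |c| < 1, E ≠ 0 and E² = a² + |b|², in which case Sol(a, b, c, E) is one-dimensional. -/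
noncomputable section

open scoped ComplexConjugate

/-!
Write `u, v, z, w` for the four components of `ψ n`. Eliminating `u, w`, each of the middle
components satisfies `c̄ x (n + 2) = K x (n + 1) - c x n` with `K = 1 + a² - E² + |b|² + |c|²`, and
the boundary condition acts as `x (-1) = 0`. The characteristic roots have product `c / c̄` of
modulus one, so one of them has modulus `≥ 1`, and a decaying solution of such a recurrence
vanishes; for `c = 0` the recurrence degenerates to `K x = 0`, which forces `x = 0` except on the
flat band `E² = a² + |b|² + 1`. Once `v = z = 0`, the outer components are geometric with ratio
`c` and the boundary condition says that `(u 0, w 0)` is an `E`-eigenvector of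
`[[a, b̄], [b, -a]]`, whose eigenvalues are `±√(a² + |b|²)`. On the flat band instead, every cell
of the decoupled chain carries its own compactly supported solution.
-/

open Filter Topology

section Recurrence

variable {𝕜 : Type*} [NormedField 𝕜]

lemma eq_zero_of_tendsto_of_succ_eq_mul {x : ℕ → 𝕜} {r : 𝕜} (hr : 1 ≤ ‖r‖)
    (hx : ∀ n, x (n + 1) = r * x n) (hlim : Tendsto x atTop (𝓝 0)) : x = 0 := by
  have hmono : Monotone fun n => ‖x n‖ := monotone_nat_of_le_succ fun n => by
    rw [hx, norm_mul]
    exact le_mul_of_one_le_left (norm_nonneg _) hr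
  have hlim' : Tendsto (fun n => ‖x n‖) atTop (𝓝 0) := by simpa using hlim.norm
  funext n
  exact norm_le_zero_iff.mp (hmono.ge_of_tendsto hlim' n)

variable [IsAlgClosed 𝕜]

open Polynomial in
lemma exists_vieta_of_norm_le {p q : 𝕜} (K : 𝕜) (hp : p ≠ 0) (hpq : ‖p‖ ≤ ‖q‖) :
    ∃ r s : 𝕜, p * (r + s) = K ∧ p * (r * s) = q ∧ 1 ≤ ‖r‖ := by
  obtain ⟨r, hr⟩ := IsAlgClosed.exists_root (C p * X ^ 2 + C (-K) * X + C q)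
    (by rw [degree_quadratic hp]; decide)
  simp only [IsRoot, eval_add, eval_mul, eval_C, eval_pow, eval_X] at hr
  have hsum : p * (r + (K / p - r)) = K := by field_simp; ring
  have hprod : p * (r * (K / p - r)) = q := by field_simp; linear_combination -hr
  have hnorm : 1 ≤ ‖r‖ * ‖K / p - r‖ := by
    have hp' : 0 < ‖p‖ := norm_pos_iff.mpr hp
    rw [← norm_mul, ← mul_le_mul_iff_right₀ hp', mul_one, ← norm_mul, hprod]
    exact hpq
  rcases le_or_gt 1 ‖r‖ with hr1 | hr1
  · exact ⟨r, K / p - r, hsum, hprod, hr1⟩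
  · refine ⟨K / p - r, r, by rw [add_comm, hsum], by linear_combination hprod, ?_⟩
    nlinarith [norm_nonneg r, norm_nonneg (K / p - r)]

lemma eq_zero_of_recurrence_s15 {p q K : 𝕜} (hpK : p ≠ 0 ∨ K ≠ 0) (hpq : ‖p‖ ≤ ‖q‖) {x : ℕ → 𝕜}
    (h0 : p * x 1 = K * x 0) (hrec : ∀ n, p * x (n + 2) = K * x (n + 1) - q * x n)
    (hlim : Tendsto x atTop (𝓝 0)) : x = 0 := by
  by_cases hp : p = 0
  · have hK : K ≠ 0 := hpK.resolve_left (not_not.mpr hp)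
    subst hp
    funext n
    induction n with
    | zero => simpa [hK] using h0
    | succ n ih => simpa [ih, hK] using hrec n
  obtain ⟨r, s, hsum, hprod, hr⟩ := exists_vieta_of_norm_le K hp hpq
  -- `x (n + 1) - s * x n` is geometric with ratio `r`, so it vanishes since `‖r‖ ≥ 1`
  have hy : (fun n => x (n + 1) - s * x n) = 0 := by
    refine eq_zero_of_tendsto_of_succ_eq_mul hr (fun n => mul_left_cancel₀ hp ?_) ?_
    · linear_combination hrec n - x (n + 1) * hsum + x n * hprod
    · simpa using ((tendsto_add_atTop_iff_nat 1).mpr hlim).sub (hlim.const_mul s)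
  have hstep (n : ℕ) : x (n + 1) = s * x n := sub_eq_zero.mp (congrFun hy n)
  have hx0 : x 0 = 0 := by
    have : p * r * x 0 = 0 := by linear_combination -h0 + p * hstep 0 + x 0 * hsum
    simpa [hp, norm_pos_iff.mp (one_pos.trans_le hr)] using this
  funext n
  induction n with
  | zero => exact hx0
  | succ n ih => simp [hstep, ih]

end Recurrence

open scoped Matrix

section Model

variable {a : ℝ} {b c : ℂ} {E : ℝ} {ψ : ℕ → Fin 4 → ℂ}

lemma eigen_equation_rows (x y z : Fin 4 → ℂ) :
    Amat *ᵥ x + (Vmat a b c - (E : ℂ) • 1) *ᵥ y + Amatᴴ *ᵥ z =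
      ![-x 1 + ((a : ℂ) - E) * y 0 + conj c * y 1 + conj b * y 3,
        c * y 0 - ((a : ℂ) + E) * y 1 + conj b * y 2 - z 0,
        b * y 1 + ((a : ℂ) - E) * y 2 - c * y 3 + z 3,
        x 2 + b * y 0 - conj c * y 2 - ((a : ℂ) + E) * y 3] := by
  rw [Matrix.sub_mulVec, Matrix.smul_mulVec, Matrix.one_mulVec]
  ext i
  fin_cases i <;>
    simp [Vmat, Amat, Matrix.mulVec, dotProduct, Fin.sum_univ_four, Matrix.vecHead,
      Matrix.vecTail] <;> ring

lemma isSolSeq_iff : IsSolSeq a b c E ψ ↔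
    ((a : ℂ) - E) * ψ 0 0 + conj c * ψ 0 1 + conj b * ψ 0 3 = 0 ∧
    -b * ψ 0 0 + conj c * ψ 0 2 + ((a : ℂ) + E) * ψ 0 3 = 0 ∧
    (∀ n, ψ (n + 1) 0 = c * ψ n 0 - ((a : ℂ) + E) * ψ n 1 + conj b * ψ n 2) ∧
    (∀ n, ψ (n + 1) 3 = c * ψ n 3 - b * ψ n 1 - ((a : ℂ) - E) * ψ n 2) ∧
    (∀ n, ψ n 1 = ((a : ℂ) - E) * ψ (n + 1) 0 + conj c * ψ (n + 1) 1 + conj b * ψ (n + 1) 3) ∧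
    (∀ n, ψ n 2 = -b * ψ (n + 1) 0 + conj c * ψ (n + 1) 2 + ((a : ℂ) + E) * ψ (n + 1) 3) := by
  have hbdry : (Vmat a b c - (E : ℂ) • 1) *ᵥ ψ 0 + Amatᴴ *ᵥ ψ 1 =
      Amat *ᵥ 0 + (Vmat a b c - (E : ℂ) • 1) *ᵥ ψ 0 + Amatᴴ *ᵥ ψ 1 := by simp
  simp only [IsSolSeq, hbdry, eigen_equation_rows, Matrix.cons_eq_zero_iff, Matrix.zero_empty,
    and_true, Pi.zero_apply, neg_zero, zero_add, forall_and]
  constructor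
  · rintro ⟨⟨hB1, hR1, hR2, hB2⟩, hL1, hR1', hR2', hL2⟩
    refine ⟨hB1, by linear_combination -hB2, fun n => ?_, fun n => ?_,
      fun n => by linear_combination -hL1 n, fun n => by linear_combination hL2 n⟩
    · cases n with
      | zero => linear_combination -hR1
      | succ n => linear_combination -hR1' n
    · cases n with
      | zero => linear_combination hR2
      | succ n => linear_combination hR2' n
  · rintro ⟨hB1, hB2, hR1, hR2, hL1, hL2⟩
    exact ⟨⟨hB1, by linear_combination -hR1 0, by linear_combination hR2 0,
      by linear_combination -hB2⟩, fun n => by linear_combination -hL1 n,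
      fun n => by linear_combination -hR1 (n + 1), fun n => by linear_combination hR2 (n + 1),
      fun n => by linear_combination hL2 n⟩

lemma IsSolSeq.inner_recurrence (h : IsSolSeq a b c E ψ) {i : Fin 4} (hi : i = 1 ∨ i = 2) :
    conj c * ψ 1 i = (1 + (a : ℂ) ^ 2 - (E : ℂ) ^ 2 + conj b * b + conj c * c) * ψ 0 i ∧
      ∀ n, conj c * ψ (n + 2) i =
        (1 + (a : ℂ) ^ 2 - (E : ℂ) ^ 2 + conj b * b + conj c * c) * ψ (n + 1) i - c * ψ n i := by
  obtain ⟨hB1, hB2, hR1, hR2, hL1, hL2⟩ := isSolSeq_iff.mp h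
  rcases hi with rfl | rfl
  · refine ⟨?_, fun n => ?_⟩
    · linear_combination -hL1 0 - ((a : ℂ) - E) * hR1 0 - conj b * hR2 0 - c * hB1
    · linear_combination -hL1 (n + 1) - ((a : ℂ) - E) * hR1 (n + 1) - conj b * hR2 (n + 1) +
        c * hL1 n
  · refine ⟨?_, fun n => ?_⟩
    · linear_combination -hL2 0 + b * hR1 0 - ((a : ℂ) + E) * hR2 0 - c * hB2
    · linear_combination -hL2 (n + 1) + b * hR1 (n + 1) - ((a : ℂ) + E) * hR2 (n + 1) +
        c * hL2 n

lemma IsL2Seq.tendsto_apply (h : IsL2Seq ψ) (i : Fin 4) :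
    Tendsto (fun n => ψ n i) atTop (𝓝 0) := by
  have hsq : Tendsto (fun n => ‖ψ n i‖ ^ 2) atTop (𝓝 0) :=
    (Summable.of_nonneg_of_le (fun _ => by positivity)
      (fun n => Finset.single_le_sum (fun j _ => sq_nonneg ‖ψ n j‖) (Finset.mem_univ i))
      h).tendsto_atTop_zero
  rw [tendsto_zero_iff_norm_tendsto_zero]
  simpa using hsq.sqrt

lemma IsSolSeq.inner_eq_zero (h : IsSolSeq a b c E ψ) (hl2 : IsL2Seq ψ)
    (hne : ¬(c = 0 ∧ E ^ 2 = a ^ 2 + ‖b‖ ^ 2 + 1)) {i : Fin 4} (hi : i = 1 ∨ i = 2) (n : ℕ) :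
    ψ n i = 0 := by
  obtain ⟨h0, hrec⟩ := h.inner_recurrence hi
  refine congrFun (eq_zero_of_recurrence_s15 ?_ (by simp) h0 hrec (hl2.tendsto_apply i)) n
  by_cases hc : c = 0
  · refine Or.inr fun hK => hne ⟨hc, ?_⟩
    rw [hc, Complex.conj_mul'] at hK
    have hK' : ((1 + a ^ 2 - E ^ 2 + ‖b‖ ^ 2 : ℝ) : ℂ) = 0 := by
      rw [← hK]; push_cast; ring
    linarith [Complex.ofReal_eq_zero.mp hK']
  · exact Or.inl (by simpa using hc)

lemma smul_eSeq₁_add_smul_eSeq₄_apply (α β : ℂ) (n : ℕ) :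
    (α • eSeq₁ c + β • eSeq₄ c) n = ![α * c ^ n, 0, 0, β * c ^ n] := by
  ext i
  fin_cases i <;> simp [eSeq₁, eSeq₄]

lemma smul_eSeq₁_add_smul_eSeq₄_eq_zero {α β : ℂ} :
    α • eSeq₁ c + β • eSeq₄ c = 0 ↔ α = 0 ∧ β = 0 := by
  refine ⟨fun h => ?_, fun h => by simp [h]⟩
  have h0 := congrFun h 0
  rw [smul_eSeq₁_add_smul_eSeq₄_apply] at h0
  exact ⟨by simpa using congrFun h0 0, by simpa using congrFun h0 3⟩

/-- `(α, β)` is an eigenvector for `E` of the block `[[a, b̄], [b, -a]]` of `V` on the first and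
last coordinates (or zero). -/
def BlockEigen (a : ℝ) (b : ℂ) (E : ℝ) (α β : ℂ) : Prop :=
  (a : ℂ) * α + conj b * β = E * α ∧ b * α - (a : ℂ) * β = E * β

lemma isSolSeq_geometric_iff {α β : ℂ} :
    IsSolSeq a b c E (α • eSeq₁ c + β • eSeq₄ c) ↔ BlockEigen a b E α β := by
  simp only [isSolSeq_iff, smul_eSeq₁_add_smul_eSeq₄_apply, Matrix.cons_val_zero,
    Matrix.cons_val_one, Matrix.cons_val_two, Matrix.cons_val_three, Matrix.head_cons,
    Matrix.tail_cons, BlockEigen]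
  constructor
  · rintro ⟨hB1, hB2, -⟩
    exact ⟨by linear_combination hB1, by linear_combination -hB2⟩
  · rintro ⟨h1, h2⟩
    refine ⟨by linear_combination h1, by linear_combination -h2, fun n => by ring,
      fun n => by ring, fun n => by linear_combination -c ^ (n + 1) * h1,
      fun n => by linear_combination c ^ (n + 1) * h2⟩

lemma isL2Seq_geometric_iff {α β : ℂ} :
    IsL2Seq (α • eSeq₁ c + β • eSeq₄ c) ↔ (α = 0 ∧ β = 0) ∨ ‖c‖ < 1 := by
  by_cases hαβ : α = 0 ∧ β = 0
  · simp [hαβ, IsL2Seq]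
  have hsum : (fun n => ∑ i, ‖(α • eSeq₁ c + β • eSeq₄ c) n i‖ ^ 2) =
      fun n => (‖α‖ ^ 2 + ‖β‖ ^ 2) * (‖c‖ ^ 2) ^ n := by
    funext n
    rw [smul_eSeq₁_add_smul_eSeq₄_apply]
    simp only [Fin.sum_univ_four, Matrix.cons_val_zero, Matrix.cons_val_one, Matrix.cons_val,
      Complex.norm_mul, norm_pow, mul_pow, ← pow_mul, norm_zero, ne_eq, OfNat.ofNat_ne_zero,
      not_false_eq_true, zero_pow, add_zero]
    ring
  have hpos : ‖α‖ ^ 2 + ‖β‖ ^ 2 ≠ 0 := by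
    rcases not_and_or.mp hαβ with h | h
    · have := norm_pos_iff.mpr h; positivity
    · have := norm_pos_iff.mpr h; positivity
  rw [IsL2Seq, hsum, summable_mul_left_iff hpos, summable_geometric_iff_norm_lt_one]
  simp [hαβ]

lemma geometric_mem_Sol_iff {α β : ℂ} :
    α • eSeq₁ c + β • eSeq₄ c ∈ Sol a b c E ↔
      BlockEigen a b E α β ∧ ((α = 0 ∧ β = 0) ∨ ‖c‖ < 1) :=
  and_congr isSolSeq_geometric_iff isL2Seq_geometric_iff

lemma IsSolSeq.eq_geometric (h : IsSolSeq a b c E ψ) (hv : ∀ n, ψ n 1 = 0)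
    (hz : ∀ n, ψ n 2 = 0) : ψ = ψ 0 0 • eSeq₁ c + ψ 0 3 • eSeq₄ c := by
  obtain ⟨-, -, hR1, hR2, -⟩ := isSolSeq_iff.mp h
  have hu (n : ℕ) : ψ n 0 = ψ 0 0 * c ^ n := by
    induction n with
    | zero => simp
    | succ n ih => rw [hR1, ih, hv, hz]; ring
  have hw (n : ℕ) : ψ n 3 = ψ 0 3 * c ^ n := by
    induction n with
    | zero => simp
    | succ n ih => rw [hR2, ih, hv, hz]; ring
  funext n
  rw [smul_eSeq₁_add_smul_eSeq₄_apply]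
  ext i
  fin_cases i <;> simp [hu n, hv n, hz n, hw n]

lemma mem_Sol_iff_geometric (hne : ¬(c = 0 ∧ E ^ 2 = a ^ 2 + ‖b‖ ^ 2 + 1)) :
    ψ ∈ Sol a b c E ↔ ∃ α β : ℂ, ψ = α • eSeq₁ c + β • eSeq₄ c ∧
      BlockEigen a b E α β ∧ ((α = 0 ∧ β = 0) ∨ ‖c‖ < 1) := by
  refine ⟨fun hψ => ?_, fun ⟨α, β, hψ, h⟩ => hψ ▸ geometric_mem_Sol_iff.mpr h⟩
  have hgeom := hψ.1.eq_geometric (hψ.1.inner_eq_zero hψ.2 hne (Or.inl rfl))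
    (hψ.1.inner_eq_zero hψ.2 hne (Or.inr rfl))
  rw [hgeom] at hψ
  exact ⟨ψ 0 0, ψ 0 3, hgeom, geometric_mem_Sol_iff.mp hψ⟩

lemma BlockEigen.sq_eq {α β : ℂ} (h : BlockEigen a b E α β) (hne : ¬(α = 0 ∧ β = 0)) :
    E ^ 2 = a ^ 2 + ‖b‖ ^ 2 := by
  obtain ⟨h1, h2⟩ := h
  have hdet : ((a ^ 2 + ‖b‖ ^ 2 - E ^ 2 : ℝ) : ℂ) * α = 0 ∧
      ((a ^ 2 + ‖b‖ ^ 2 - E ^ 2 : ℝ) : ℂ) * β = 0 := by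
    push_cast
    rw [← Complex.conj_mul']
    exact ⟨by linear_combination ((a : ℂ) + E) * h1 + conj b * h2,
      by linear_combination b * h1 - ((a : ℂ) - E) * h2⟩
  have hdet0 : ((a ^ 2 + ‖b‖ ^ 2 - E ^ 2 : ℝ) : ℂ) = 0 := by
    rcases not_and_or.mp hne with h | h
    · exact (mul_eq_zero.mp hdet.1).resolve_right h
    · exact (mul_eq_zero.mp hdet.2).resolve_right h
  linarith [Complex.ofReal_eq_zero.mp hdet0]

lemma exists_blockEigen_generator (hE : E ≠ 0) (hD : E ^ 2 = a ^ 2 + ‖b‖ ^ 2) :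
    ∃ g₁ g₂ : ℂ, ¬(g₁ = 0 ∧ g₂ = 0) ∧
      ∀ α β, BlockEigen a b E α β ↔ ∃ t, α = t * g₁ ∧ β = t * g₂ := by
  have hD' : (E : ℂ) ^ 2 = (a : ℂ) ^ 2 + conj b * b := by
    rw [Complex.conj_mul']; exact_mod_cast hD
  by_cases hEa : E = a
  · subst hEa
    have hb : b = 0 := by simpa using hD
    subst hb
    have hE2 : (E : ℂ) + E ≠ 0 := by exact_mod_cast fun h => hE (by linarith)
    refine ⟨1, 0, by simp, fun α β => ⟨fun ⟨_, h2⟩ => ⟨α, by ring, ?_⟩, ?_⟩⟩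
    · simpa [hE2] using (by linear_combination -h2 : ((E : ℂ) + E) * β = 0)
    · rintro ⟨t, rfl, rfl⟩
      simp [BlockEigen]
  · have hEa' : (E : ℂ) - a ≠ 0 := sub_ne_zero.mpr (by exact_mod_cast hEa)
    refine ⟨conj b, E - a, fun h => hEa' h.2, fun α β => ⟨fun ⟨h1, h2⟩ => ?_, ?_⟩⟩
    · refine ⟨β / (E - a), ?_, by field_simp⟩
      field_simp
      linear_combination -h1
    · rintro ⟨t, rfl, rfl⟩
      exact ⟨by ring, by linear_combination -t * hD'⟩

/-- For `c = 0` the equations couple `ψ N 1, ψ N 2` only to `ψ (N + 1) 0, ψ (N + 1) 3`, so the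
chain splits into independent cells; when `E ^ 2 = a ^ 2 + ‖b‖ ^ 2 + 1` each cell carries this
eigenvector. -/
def localizedSol (a E : ℝ) (b : ℂ) (N : ℕ) : ℕ → Fin 4 → ℂ := fun n =>
  ![if n = N + 1 then 1 else 0, if n = N then (a : ℂ) - E else 0, if n = N then -b else 0, 0]

lemma localizedSol_mem_Sol (hE : E ^ 2 = a ^ 2 + ‖b‖ ^ 2 + 1) (N : ℕ) :
    localizedSol a E b N ∈ Sol a b 0 E := by
  have hE' : (E : ℂ) ^ 2 = (a : ℂ) ^ 2 + conj b * b + 1 := by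
    rw [Complex.conj_mul']; exact_mod_cast hE
  refine ⟨isSolSeq_iff.mpr ⟨by simp [localizedSol], by simp [localizedSol], fun n => ?_,
    fun n => ?_, fun n => ?_, fun n => ?_⟩, ?_⟩
  · by_cases h : n = N
    · simp only [localizedSol, h, ↓reduceIte, Matrix.cons_val_zero, Matrix.cons_val_one,
        Matrix.cons_val, mul_neg]
      linear_combination -hE'
    · simp [localizedSol, h]
  · by_cases h : n = N
    · simp only [localizedSol, h, ↓reduceIte, Nat.left_eq_add, one_ne_zero, Matrix.cons_val,
        mul_zero, Matrix.cons_val_one, Matrix.cons_val_zero, zero_sub, mul_neg, sub_neg_eq_add]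
      ring
    · simp [localizedSol, h]
  · by_cases h : n = N <;> simp [localizedSol, h]
  · by_cases h : n = N <;> simp [localizedSol, h]
  refine summable_of_ne_finset_zero (s := {N, N + 1}) fun n hn => ?_
  simp only [Finset.mem_insert, Finset.mem_singleton, not_or] at hn
  simp [localizedSol, hn.1, hn.2, Fin.sum_univ_four]

lemma linearIndependent_localizedSol : LinearIndependent ℂ (localizedSol a E b) := by
  rw [linearIndependent_iff']
  intro s g hg i hi
  have := congrFun (congrFun hg (i + 1)) 0
  simpa [localizedSol, Finset.sum_apply, hi] using this

lemma not_exists_finset_Sol_subset_span (hE : E ^ 2 = a ^ 2 + ‖b‖ ^ 2 + 1) :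
    ¬ ∃ s : Finset (ℕ → Fin 4 → ℂ),
      Sol a b 0 E ⊆ (Submodule.span ℂ (s : Set (ℕ → Fin 4 → ℂ)) : Set (ℕ → Fin 4 → ℂ)) := by
  rintro ⟨s, hs⟩
  exact Finite.false <| linearIndependent_localizedSol.finite_of_le_span_finite _ s
    (Set.range_subset_iff.mpr fun N => hs (localizedSol_mem_Sol hE N))

lemma Sol_zero_zero_zero (hc : ‖c‖ < 1) :
    Sol 0 0 c 0 = {χ | ∃ z w : ℂ, χ = z • eSeq₁ c + w • eSeq₄ c} := by
  ext χ
  rw [mem_Sol_iff_geometric (by norm_num)]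
  simp [BlockEigen, hc]

lemma exists_Sol_eq_span_singleton (hc : ‖c‖ < 1) (hE : E ≠ 0) (hD : E ^ 2 = a ^ 2 + ‖b‖ ^ 2) :
    ∃ ψ : ℕ → Fin 4 → ℂ, ψ ∈ Sol a b c E ∧ ψ ≠ 0 ∧ Sol a b c E = {χ | ∃ z : ℂ, χ = z • ψ} := by
  obtain ⟨g₁, g₂, hg, hgen⟩ := exists_blockEigen_generator hE hD
  refine ⟨g₁ • eSeq₁ c + g₂ • eSeq₄ c,
    geometric_mem_Sol_iff.mpr ⟨(hgen _ _).mpr ⟨1, by ring, by ring⟩, Or.inr hc⟩,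
    fun h => hg (smul_eSeq₁_add_smul_eSeq₄_eq_zero.mp h), ?_⟩
  ext χ
  rw [mem_Sol_iff_geometric fun h => by linarith [h.2]]
  constructor
  · rintro ⟨α, β, rfl, hαβ, -⟩
    obtain ⟨t, rfl, rfl⟩ := (hgen α β).mp hαβ
    exact ⟨t, by rw [smul_add, smul_smul, smul_smul]⟩
  · rintro ⟨t, rfl⟩
    exact ⟨t * g₁, t * g₂, by rw [smul_add, smul_smul, smul_smul],
      (hgen _ _).mpr ⟨t, rfl, rfl⟩, Or.inr hc⟩

end Model

/-- Fix `a ∈ ℝ`, `b, c ∈ ℂ` and `E ∈ ℝ`. There exists a nonzero ℓ²-solution of the half-line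
eigenvalue equation iff one of the following holds: (a) `c = 0` and `E² = a² + |b|² + 1`, in
which case `Sol(a,b,0,E)` is infinite-dimensional; (b) `b = 0`, `a = 0`, `E = 0` and
`|c| < 1`, in which case `Sol(0,0,c,0)` is two-dimensional; (c) `|c| < 1`, `E ≠ 0` and
`E² = a² + |b|²`, in which case `Sol(a,b,c,E)` is one-dimensional. -/
theorem stmt15 (a : ℝ) (b c : ℂ) (E : ℝ) :
    ((∃ ψ ∈ Sol a b c E, ψ ≠ 0) ↔
      ((c = 0 ∧ E ^ 2 = a ^ 2 + ‖b‖ ^ 2 + 1) ∨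
       (b = 0 ∧ a = 0 ∧ E = 0 ∧ ‖c‖ < 1) ∨
       (‖c‖ < 1 ∧ E ≠ 0 ∧ E ^ 2 = a ^ 2 + ‖b‖ ^ 2))) ∧
    (c = 0 → E ^ 2 = a ^ 2 + ‖b‖ ^ 2 + 1 →
      ¬ ∃ s : Finset (ℕ → Fin 4 → ℂ),
        Sol a b c E ⊆ (Submodule.span ℂ (s : Set (ℕ → Fin 4 → ℂ)) :
          Set (ℕ → Fin 4 → ℂ))) ∧
    (b = 0 → a = 0 → E = 0 → ‖c‖ < 1 →
      ∃ ψ φ : ℕ → Fin 4 → ℂ, ψ ∈ Sol a b c E ∧ φ ∈ Sol a b c E ∧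
        LinearIndependent ℂ ![ψ, φ] ∧
        Sol a b c E = {χ | ∃ z w : ℂ, χ = z • ψ + w • φ}) ∧
    (‖c‖ < 1 → E ≠ 0 → E ^ 2 = a ^ 2 + ‖b‖ ^ 2 →
      ∃ ψ : ℕ → Fin 4 → ℂ, ψ ∈ Sol a b c E ∧ ψ ≠ 0 ∧
        Sol a b c E = {χ | ∃ z : ℂ, χ = z • ψ}) := by
  refine ⟨⟨?_, ?_⟩, ?_, ?_, exists_Sol_eq_span_singleton⟩
  · rintro ⟨ψ, hψ, hψ0⟩
    by_cases hA : c = 0 ∧ E ^ 2 = a ^ 2 + ‖b‖ ^ 2 + 1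
    · exact Or.inl hA
    obtain ⟨α, β, rfl, hαβ, hc⟩ := (mem_Sol_iff_geometric hA).mp hψ
    have hne : ¬(α = 0 ∧ β = 0) := fun h => hψ0 (smul_eSeq₁_add_smul_eSeq₄_eq_zero.mpr h)
    have hD := hαβ.sq_eq hne
    by_cases hE : E = 0
    · subst hE
      have ha : a = 0 := by nlinarith [sq_nonneg ‖b‖]
      have hb : ‖b‖ = 0 := by nlinarith [sq_nonneg a]
      exact Or.inr (Or.inl ⟨norm_eq_zero.mp hb, ha, rfl, hc.resolve_left hne⟩)
    · exact Or.inr (Or.inr ⟨hc.resolve_left hne, hE, hD⟩)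
  · rintro (⟨rfl, hE⟩ | ⟨rfl, rfl, rfl, hc⟩ | ⟨hc, hE, hD⟩)
    · refine ⟨localizedSol a E b 0, localizedSol_mem_Sol hE 0, fun h => ?_⟩
      simpa [localizedSol] using congrFun (congrFun h 1) 0
    · refine ⟨eSeq₁ c, by rw [Sol_zero_zero_zero hc]; exact ⟨1, 0, by simp⟩, fun h => ?_⟩
      simpa [eSeq₁] using congrFun (congrFun h 0) 0
    · obtain ⟨ψ, hψ, hψ0, -⟩ := exists_Sol_eq_span_singleton hc hE hD
      exact ⟨ψ, hψ, hψ0⟩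
  · rintro rfl hE
    exact not_exists_finset_Sol_subset_span hE
  · rintro rfl rfl rfl hc
    rw [Sol_zero_zero_zero hc]
    refine ⟨eSeq₁ c, eSeq₄ c, ⟨1, 0, by simp⟩, ⟨0, 1, by simp⟩, ?_, rfl⟩
    exact LinearIndependent.pair_iff.mpr fun s t => smul_eSeq₁_add_smul_eSeq₄_eq_zero.mp
end
end

section
/- Fix a ∈ ℝ and b, c ∈ ℂ with |c| < 1. Define the operator H♯ on sequences ψ : {1,2,…} → ℂ⁴ by (H♯ψ)(1) = V·ψ(1) + A*·ψ(2) and (H♯ψ)(n+1) = A·ψ(n) + V·ψ(n+1) + A*·ψ(n+2) for n ≥ 1. Then H♯e₁ = a·e₁ + b·e₄ and H♯e₄ = b̄·e₁ − a·e₄; that is, the span of e₁ and e₄ is invariant under H♯, and in the ordered basis (e₁, e₄) the restriction of H♯ has matrix [[a, b̄], [b, −a]] = Re(b)σ₁ + Im(b)σ₂ + aσ₃, where σ₁, σ₂, σ₃ are the Pauli matrices. -/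
noncomputable section

open scoped ComplexConjugate

/-- The half-line operator `H♯` acting on sequences `ψ : {1,2,…} → ℂ⁴` (here indexed so that
`ψ n` is the value at the site `n + 1`): `(H♯ψ)(1) = Vψ(1) + A*ψ(2)` and
`(H♯ψ)(n+1) = Aψ(n) + Vψ(n+1) + A*ψ(n+2)` for `n ≥ 1`. -/
def Hsharp (a : ℝ) (b c : ℂ) (ψ : ℕ → Fin 4 → ℂ) : ℕ → Fin 4 → ℂ
  | 0 => (Vmat a b c).mulVec (ψ 0) + (Amat.conjTranspose).mulVec (ψ 1)
  | n + 1 =>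
      Amat.mulVec (ψ n) + (Vmat a b c).mulVec (ψ (n + 1)) +
        (Amat.conjTranspose).mulVec (ψ (n + 2))

lemma AmatCT : Amat.conjTranspose =
    !![0, 0, 0, 0; -1, 0, 0, 0; 0, 0, 0, 1; 0, 0, 0, 0] := by
  ext i j
  fin_cases i <;> fin_cases j <;>
    simp [Amat, Matrix.conjTranspose_apply, Matrix.vecHead, Matrix.vecTail]

/-- Fix `a ∈ ℝ` and `b, c ∈ ℂ` with `|c| < 1`. Then `H♯e₁ = a·e₁ + b·e₄` and
`H♯e₄ = b̄·e₁ − a·e₄`; that is, the span of `e₁` and `e₄` is invariant under `H♯`, and in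
the ordered basis `(e₁, e₄)` the restriction of `H♯` has matrix
`[[a, b̄], [b, −a]] = Re(b)σ₁ + Im(b)σ₂ + aσ₃`, where `σ₁, σ₂, σ₃` are the Pauli matrices. -/
theorem stmt16 (a : ℝ) (b c : ℂ) (hc : ‖c‖ < 1) :
    Hsharp a b c (eSeq₁ c) = (a : ℂ) • eSeq₁ c + b • eSeq₄ c ∧
    Hsharp a b c (eSeq₄ c) = (conj b) • eSeq₁ c + (-(a : ℂ)) • eSeq₄ c ∧
    (!![(a : ℂ), conj b; b, -(a : ℂ)] =
      ((b.re : ℂ)) • !![0, 1; 1, 0] +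
        ((b.im : ℂ)) • !![0, -Complex.I; Complex.I, 0] +
        ((a : ℂ)) • !![1, 0; 0, -1]) := by
  refine ⟨?_, ?_, ?_⟩
  · funext n i
    cases n with
    | zero =>
      fin_cases i <;>
        simp [Hsharp, Vmat, Amat, eSeq₁, eSeq₄, Matrix.mulVec, dotProduct,
          AmatCT, Fin.sum_univ_four, Matrix.vecHead, Matrix.vecTail] <;> ring
    | succ n =>
      fin_cases i <;>
        simp [Hsharp, Vmat, Amat, eSeq₁, eSeq₄, Matrix.mulVec, dotProduct,
          AmatCT, Fin.sum_univ_four, Matrix.vecHead, Matrix.vecTail] <;> ring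
  · funext n i
    cases n with
    | zero =>
      fin_cases i <;>
        simp [Hsharp, Vmat, Amat, eSeq₁, eSeq₄, Matrix.mulVec, dotProduct,
          AmatCT, Fin.sum_univ_four, Matrix.vecHead, Matrix.vecTail] <;> ring
    | succ n =>
      fin_cases i <;>
        simp [Hsharp, Vmat, Amat, eSeq₁, eSeq₄, Matrix.mulVec, dotProduct,
          AmatCT, Fin.sum_univ_four, Matrix.vecHead, Matrix.vecTail] <;> ring
  · ext i j
    fin_cases i <;> fin_cases j <;>
      simp [Complex.ext_iff]
end
end
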